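/- Let f be the standard normal density, Q its tail function, Φ its cdf. For all real x₁, x₂: 2(Q(x₁)+Φ(x₂)) + (x₁f(x₁) − x₂f(x₂)) − (√(x₁²+4)·f(x₁) + √(x₂²+4)·f(x₂)) > 0. -/

import Mathlib

open Real MeasureTheory Set

noncomputable def stdNormalPdf (x : ℝ) : ℝ := (Real.sqrt (2 * Real.pi))⁻¹ * Real.exp (-x ^ 2 / 2)

noncomputable def gaussQ (x : ℝ) : ℝ := ∫ t in Set.Ici x, stdNormalPdf t

noncomputable def gaussPhi (x : ℝ) : ℝ := ∫ t in Set.Iic x, stdNormalPdf t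

/-! Let `g x = 2 Q(x) + (x - √(x² + 4)) f(x)`. Using `f' = -x f` one finds
`g' x = f(x) ((x³ + 3x) / √(x² + 4) - (1 + x²))`, which is negative because
`(1 + x²)² (x² + 4) = (x³ + 3x)² + 4`. Since `g → 0` at `+∞`, `g` is positive everywhere.
The theorem is `g x₁ + g (-x₂) > 0`, by `Φ(x) = Q(-x)` and the evenness of `f`. -/

open Filter Topology

theorem StrictAnti.lt_of_tendsto_atTop {α β : Type*} [TopologicalSpace α] [Preorder α]
    [OrderClosedTopology α] [LinearOrder β] [NoMaxOrder β] {f : β → α} {a : α}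
    (hf : StrictAnti f) (ha : Tendsto f atTop (𝓝 a)) (b : β) : a < f b :=
  let ⟨c, hbc⟩ := exists_gt b
  (hf.antitone.le_of_tendsto ha c).trans_lt (hf hbc)

lemma sqrt_sq_add_four_pos (x : ℝ) : 0 < √(x ^ 2 + 4) := by positivity

lemma sq_sqrt_sq_add_four (x : ℝ) : √(x ^ 2 + 4) ^ 2 = x ^ 2 + 4 := sq_sqrt (by positivity)

lemma le_sqrt_sq_add_four (x : ℝ) : x ≤ √(x ^ 2 + 4) := le_sqrt_of_sq_le (by linarith)

lemma sqrt_sq_add_four_le {x : ℝ} (hx : 0 ≤ x) : √(x ^ 2 + 4) ≤ x + 2 :=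
  (sqrt_le_left (by linarith)).2 (by nlinarith)

lemma cube_add_three_mul_lt_sqrt_sq_add_four_mul (x : ℝ) :
    x ^ 3 + 3 * x < √(x ^ 2 + 4) * (1 + x ^ 2) := by
  have hsq : (√(x ^ 2 + 4) * (1 + x ^ 2)) ^ 2 = (x ^ 3 + 3 * x) ^ 2 + 4 := by
    rw [mul_pow, sq_sqrt_sq_add_four]; ring
  have hpos : 0 < √(x ^ 2 + 4) * (1 + x ^ 2) := by positivity
  exact abs_lt_of_sq_lt_sq' (by linarith) hpos.le |>.2

lemma hasDerivAt_sqrt_sq_add_four (x : ℝ) :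
    HasDerivAt (fun u ↦ √(u ^ 2 + 4)) (x / √(x ^ 2 + 4)) x := by
  have h := ((hasDerivAt_pow 2 x).add_const 4).sqrt (by positivity)
  convert h using 1
  field_simp
  ring

lemma stdNormalPdf_eq_gaussianPDFReal : stdNormalPdf = ProbabilityTheory.gaussianPDFReal 0 1 := by
  ext x
  simp [stdNormalPdf, ProbabilityTheory.gaussianPDFReal]

lemma stdNormalPdf_pos (x : ℝ) : 0 < stdNormalPdf x := by
  unfold stdNormalPdf
  positivity

lemma stdNormalPdf_neg (x : ℝ) : stdNormalPdf (-x) = stdNormalPdf x := by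
  rw [stdNormalPdf, neg_sq, stdNormalPdf]

lemma integrable_stdNormalPdf : Integrable stdNormalPdf := by
  rw [stdNormalPdf_eq_gaussianPDFReal]
  exact ProbabilityTheory.integrable_gaussianPDFReal 0 1

lemma continuous_stdNormalPdf : Continuous stdNormalPdf := by
  unfold stdNormalPdf
  fun_prop

lemma hasDerivAt_stdNormalPdf (x : ℝ) : HasDerivAt stdNormalPdf (-x * stdNormalPdf x) x := by
  have h := ((((hasDerivAt_pow 2 x).neg).div_const 2).exp).const_mul (√(2 * π))⁻¹
  refine h.congr_deriv ?_
  simp only [stdNormalPdf, Pi.neg_apply, Nat.cast_ofNat]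
  ring

lemma tendsto_stdNormalPdf_atTop : Tendsto stdNormalPdf atTop (𝓝 0) := by
  have h : Tendsto (fun x : ℝ ↦ -x ^ 2 / 2) atTop atBot :=
    (tendsto_neg_atTop_atBot.comp (tendsto_pow_atTop two_ne_zero)).atBot_div_const two_pos
  have hpdf := (tendsto_exp_atBot.comp h).const_mul (√(2 * π))⁻¹
  rw [mul_zero] at hpdf
  exact hpdf

lemma gaussQ_add_intervalIntegral (x : ℝ) :
    gaussQ x + ∫ t in (0 : ℝ)..x, stdNormalPdf t = gaussQ 0 := by
  have hi := integrable_stdNormalPdf.integrableOn (s := Iic x)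
  have h0 := intervalIntegral.integral_Iic_add_Ioi (b := 0) integrable_stdNormalPdf.integrableOn
    integrable_stdNormalPdf.integrableOn
  have hx := intervalIntegral.integral_Iic_add_Ioi (b := x) hi integrable_stdNormalPdf.integrableOn
  have hsub := intervalIntegral.integral_Iic_sub_Iic (a := 0) (b := x)
    integrable_stdNormalPdf.integrableOn hi
  simp only [gaussQ, integral_Ici_eq_integral_Ioi]
  linarith

lemma hasDerivAt_gaussQ (x : ℝ) : HasDerivAt gaussQ (-stdNormalPdf x) x := by
  have hFTC : HasDerivAt (fun u ↦ ∫ t in (0 : ℝ)..u, stdNormalPdf t) (stdNormalPdf x) x :=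
    intervalIntegral.integral_hasDerivAt_right integrable_stdNormalPdf.intervalIntegrable
      (continuous_stdNormalPdf.stronglyMeasurableAtFilter _ _) continuous_stdNormalPdf.continuousAt
  have h := (hasDerivAt_const x (gaussQ 0)).sub hFTC
  rw [zero_sub] at h
  exact h.congr_of_eventuallyEq
    (Eventually.of_forall fun u ↦ eq_sub_of_add_eq (gaussQ_add_intervalIntegral u))

lemma tendsto_gaussQ_atTop : Tendsto gaussQ atTop (𝓝 0) := by
  have h := (intervalIntegral_tendsto_integral_Ioi 0 integrable_stdNormalPdf.integrableOn
    tendsto_id).const_sub (gaussQ 0)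
  have hQ0 : gaussQ 0 = ∫ t in Ioi 0, stdNormalPdf t := by
    rw [gaussQ, integral_Ici_eq_integral_Ioi]
  rw [← hQ0, sub_self] at h
  exact h.congr fun x ↦ (eq_sub_of_add_eq (gaussQ_add_intervalIntegral x)).symm

lemma gaussPhi_eq_gaussQ_neg (x : ℝ) : gaussPhi x = gaussQ (-x) := by
  simp only [gaussPhi, gaussQ, integral_Ici_eq_integral_Ioi, ← integral_comp_neg_Iic,
    stdNormalPdf_neg]

noncomputable def gaussQGap (x : ℝ) : ℝ := 2 * gaussQ x + (x - √(x ^ 2 + 4)) * stdNormalPdf x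

lemma hasDerivAt_gaussQGap (x : ℝ) :
    HasDerivAt gaussQGap
      (stdNormalPdf x * ((x ^ 3 + 3 * x) / √(x ^ 2 + 4) - (1 + x ^ 2))) x := by
  have h := ((hasDerivAt_gaussQ x).const_mul 2).add
    (((hasDerivAt_id x).sub (hasDerivAt_sqrt_sq_add_four x)).mul (hasDerivAt_stdNormalPdf x))
  refine h.congr_deriv ?_
  have hs := (sqrt_sq_add_four_pos x).ne'
  simp only [Pi.sub_apply, id_eq]
  field_simp
  linear_combination (x * stdNormalPdf x) * sq_sqrt_sq_add_four x

lemma strictAnti_gaussQGap : StrictAnti gaussQGap := by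
  refine strictAnti_of_deriv_neg fun x ↦ ?_
  rw [(hasDerivAt_gaussQGap x).deriv]
  refine mul_neg_of_pos_of_neg (stdNormalPdf_pos x) (sub_neg.2 ?_)
  rw [div_lt_iff₀ (sqrt_sq_add_four_pos x)]
  linarith [cube_add_three_mul_lt_sqrt_sq_add_four_mul x]

lemma tendsto_gaussQGap_atTop : Tendsto gaussQGap atTop (𝓝 0) := by
  have hlower : Tendsto (fun x ↦ -2 * stdNormalPdf x) atTop (𝓝 0) := by
    simpa using tendsto_stdNormalPdf_atTop.const_mul (-2)
  have hprod : Tendsto (fun x ↦ (x - √(x ^ 2 + 4)) * stdNormalPdf x) atTop (𝓝 0) := by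
    refine tendsto_of_tendsto_of_tendsto_of_le_of_le' hlower tendsto_const_nhds ?_ ?_
    · filter_upwards [eventually_ge_atTop 0] with x hx
      nlinarith [sqrt_sq_add_four_le hx, stdNormalPdf_pos x]
    · filter_upwards with x
      nlinarith [le_sqrt_sq_add_four x, stdNormalPdf_pos x]
  have h := (tendsto_gaussQ_atTop.const_mul 2).add hprod
  rw [mul_zero, add_zero] at h
  exact h

theorem stmt6 (x₁ x₂ : ℝ) :
    2 * (gaussQ x₁ + gaussPhi x₂) + (x₁ * stdNormalPdf x₁ - x₂ * stdNormalPdf x₂)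
      - (Real.sqrt (x₁ ^ 2 + 4) * stdNormalPdf x₁ + Real.sqrt (x₂ ^ 2 + 4) * stdNormalPdf x₂)
      > 0 := by
  have h₁ := strictAnti_gaussQGap.lt_of_tendsto_atTop tendsto_gaussQGap_atTop x₁
  have h₂ := strictAnti_gaussQGap.lt_of_tendsto_atTop tendsto_gaussQGap_atTop (-x₂)
  rw [gaussQGap, neg_sq, stdNormalPdf_neg] at h₂
  rw [gaussQGap] at h₁
  rw [gaussPhi_eq_gaussQ_neg]
  linarith
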